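/- Stechkin-type theorem on approximation of the differentiation operator by bounded operators: Let ω be a modulus of continuity, E a nontrivial real Banach space, a < b, t ∈ [a,b], h > 0; set h₁ = min{h, t−a}, h₂ = min{h, b−t}, I(α) = ∫_0^α ω(u) du, and N = 2/(h₁+h₂). Then: (i) for every map T from C([a,b],E) to E satisfying ‖T(g)‖ ≤ N·sup_{u∈[a,b]}‖g(u)‖ for all g ∈ C([a,b],E), one has sup_{f ∈ W^1H^ω([a,b],E)} ‖f′(t) − T(f)‖ ≥ (I(h₁) + I(h₂))/(h₁+h₂); (ii) the divided-difference operator T*(g) = (g(t+h₂) − g(t−h₁))/(h₁+h₂) satisfies ‖T*(g)‖ ≤ N·sup_{u∈[a,b]}‖g(u)‖ and sup_{f ∈ W^1H^ω([a,b],E)} ‖f′(t) − T*(f)‖ = (I(h₁) + I(h₂))/(h₁+h₂). Consequently, the best approximation of the operator f ↦ f′(t) on W^1H^ω([a,b],E) by operators of norm at most N equals (I(h₁) + I(h₂))/(h₁+h₂) and is attained at T*. -/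

import Mathlib

open MeasureTheory Set

/-- A modulus of continuity: `ω 0 = 0`, continuous, non-decreasing and subadditive on `[0, ∞)`. -/
def IsModulus (ω : ℝ → ℝ) : Prop :=
  ω 0 = 0 ∧ ContinuousOn ω (Set.Ici 0) ∧ MonotoneOn ω (Set.Ici 0) ∧
    ∀ s t : ℝ, 0 ≤ s → 0 ≤ t → ω (s + t) ≤ ω s + ω t

/-- The class `H^ω([a,b], E)`. -/
def HHolder {E : Type*} [NormedAddCommGroup E] (ω : ℝ → ℝ) (a b : ℝ) (f : ℝ → E) : Prop :=
  ∀ s ∈ Set.Icc a b, ∀ t ∈ Set.Icc a b, ‖f t - f s‖ ≤ ω |t - s|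


/-- The class `W¹H^ω([a,b],E)`: `f` is differentiable on `[a,b]` with derivative `f'` belonging
to `H^ω([a,b],E)`. -/
def W1HHolder {E : Type*} [NormedAddCommGroup E] [NormedSpace ℝ E]
    (ω : ℝ → ℝ) (a b : ℝ) (f f' : ℝ → E) : Prop :=
  (∀ t ∈ Set.Icc a b, HasDerivWithinAt f (f' t) (Set.Icc a b) t) ∧ HHolder ω a b f'

/-!
Upper bound: `f(t+h₂) - f(t-h₁) - (h₁+h₂) f'(t)` has derivative `f'(s) - f'(t)` of norm at most
`ω|s-t|`, so the mean value inequality bounds it by `∫_{t-h₁}^{t+h₂} ω|s-t| ds = I(h₁) + I(h₂)`.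

Lower bound: for any admissible `T`, testing against `f₀` and `-f₀` gives
`‖f₀'(t)‖ ≤ c + N ‖f₀‖_∞`. The extremal `f₀` has derivative `(D - ω|s-t|)₊ e` with
`D = ω(max h₁ h₂)` and `‖e‖ = 1`, shifted by a constant so that it is centred on `[a, b]`.
The choice of `h₁, h₂` makes this derivative vanish on `[a, b]` outside `[t-h₁, t+h₂]`, so
`‖f₀‖_∞ = ((h₁+h₂) D - I(h₁) - I(h₂)) / 2`, and the bound becomes
`D ≤ c + D - (I(h₁)+I(h₂))/(h₁+h₂)`.
-/

open intervalIntegral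

section Modulus

variable {ω : ℝ → ℝ}

theorem IsModulus.mono (hω : IsModulus ω) {x y : ℝ} (hx : 0 ≤ x) (hxy : x ≤ y) : ω x ≤ ω y :=
  hω.2.2.1 (mem_Ici.2 hx) (mem_Ici.2 (hx.trans hxy)) hxy

theorem IsModulus.nonneg (hω : IsModulus ω) {x : ℝ} (hx : 0 ≤ x) : 0 ≤ ω x :=
  hω.1 ▸ hω.mono le_rfl hx

theorem IsModulus.le_add_abs_sub (hω : IsModulus ω) {x y : ℝ} (hx : 0 ≤ x) (hy : 0 ≤ y) :
    ω x ≤ ω y + ω |x - y| :=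
  (hω.mono hx (by linarith [le_abs_self (x - y)])).trans (hω.2.2.2 _ _ hy (abs_nonneg _))

theorem IsModulus.abs_sub_le (hω : IsModulus ω) {x y : ℝ} (hx : 0 ≤ x) (hy : 0 ≤ y) :
    |ω x - ω y| ≤ ω |x - y| := by
  have hxy := hω.le_add_abs_sub hx hy
  have hyx := hω.le_add_abs_sub hy hx
  rw [abs_sub_comm y x] at hyx
  exact abs_sub_le_iff.2 ⟨by linarith, by linarith⟩

theorem IsModulus.abs_sub_comp_abs_sub_le (hω : IsModulus ω) (t u s : ℝ) :
    |ω (|u - t|) - ω (|s - t|)| ≤ ω |u - s| := by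
  refine (hω.abs_sub_le (abs_nonneg _) (abs_nonneg _)).trans (hω.mono (abs_nonneg _) ?_)
  simpa using abs_abs_sub_abs_le_abs_sub (u - t) (s - t)

theorem continuous_comp_abs_sub (hω : ContinuousOn ω (Ici 0)) (t : ℝ) :
    Continuous fun s => ω |s - t| :=
  hω.comp_continuous (continuous_abs.comp (continuous_id.sub continuous_const))
    fun _ => mem_Ici.2 (abs_nonneg _)

theorem integral_comp_abs_sub (hω : ContinuousOn ω (Ici 0)) {t h₁ h₂ : ℝ}
    (h1 : 0 ≤ h₁) (h2 : 0 ≤ h₂) :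
    ∫ s in (t - h₁)..(t + h₂), ω |s - t| = (∫ u in (0:ℝ)..h₁, ω u) + ∫ u in (0:ℝ)..h₂, ω u := by
  have hint := (continuous_comp_abs_sub hω t).intervalIntegrable (μ := volume)
  rw [← integral_add_adjacent_intervals (hint _ t) (hint t _)]
  have left : ∫ s in (t - h₁)..t, ω |s - t| = ∫ s in (t - h₁)..t, ω (t - s) := by
    refine integral_congr fun s hs => ?_
    rw [uIcc_of_le (by linarith)] at hs
    rw [abs_sub_comm, abs_of_nonneg (by linarith [hs.2])]
  have right : ∫ s in t..(t + h₂), ω |s - t| = ∫ s in t..(t + h₂), ω (s - t) := by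
    refine integral_congr fun s hs => ?_
    rw [uIcc_of_le (by linarith)] at hs
    rw [abs_of_nonneg (by linarith [hs.1])]
  rw [left, right, integral_comp_sub_left (fun u => ω u), integral_comp_sub_right (fun u => ω u)]
  simp

end Modulus

section UpperBound

variable {E : Type*} [NormedAddCommGroup E] [NormedSpace ℝ E] {ω : ℝ → ℝ}

theorem norm_sub_sub_smul_le_integral (hω : ContinuousOn ω (Ici 0)) {f f' : ℝ → E}
    {c d t : ℝ} (hcd : c ≤ d) (hf : ∀ x ∈ Icc c d, HasDerivWithinAt f (f' x) (Icc c d) x)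
    (hf' : ∀ x ∈ Icc c d, ‖f' x - f' t‖ ≤ ω |x - t|) :
    ‖f d - f c - (d - c) • f' t‖ ≤ ∫ x in c..d, ω |x - t| := by
  have hB (x : ℝ) : HasDerivAt (fun y => ∫ u in c..y, ω |u - t|) (ω |x - t|) x :=
    ((continuous_comp_abs_sub hω t).integral_hasStrictDerivAt c x).hasDerivAt
  refine image_norm_le_of_norm_deriv_right_le_deriv_boundary
    (f := fun x => f x - f c - (x - c) • f' t) (f' := fun x => f' x - f' t) ?_ ?_ (by simp) hB
    (fun x hx => hf' x (Ico_subset_Icc_self hx)) (right_mem_Icc.2 hcd)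
  · have hfc : ContinuousOn f (Icc c d) := fun x hx => (hf x hx).continuousWithinAt
    exact (hfc.sub continuousOn_const).sub
      ((continuousOn_id.sub continuousOn_const).smul continuousOn_const)
  · intro x hx
    have hfx := (hf x (Ico_subset_Icc_self hx)).mono_of_mem_nhdsWithin (Icc_mem_nhdsGE_of_mem hx)
    exact ((hfx.sub_const (f c)).sub
      (((hasDerivWithinAt_id x _).sub_const c).smul_const (f' t))).congr_deriv (by simp)

theorem W1HHolder.norm_deriv_sub_divided_difference_le (hω : ContinuousOn ω (Ici 0))
    {a b t h₁ h₂ : ℝ} {f f' : ℝ → E} (hW : W1HHolder ω a b f f') (h1 : 0 ≤ h₁) (h2 : 0 ≤ h₂)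
    (hp : 0 < h₁ + h₂) (hta : a ≤ t - h₁) (htb : t + h₂ ≤ b) :
    ‖f' t - (h₁ + h₂)⁻¹ • (f (t + h₂) - f (t - h₁))‖ ≤
      ((∫ u in (0:ℝ)..h₁, ω u) + ∫ u in (0:ℝ)..h₂, ω u) / (h₁ + h₂) := by
  have hsub : Icc (t - h₁) (t + h₂) ⊆ Icc a b := Icc_subset_Icc hta htb
  have ht : t ∈ Icc a b := hsub ⟨by linarith, by linarith⟩
  have key := norm_sub_sub_smul_le_integral hω (by linarith)
    (fun x hx => (hW.1 x (hsub hx)).mono hsub) (fun x hx => hW.2 t ht x (hsub hx))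
  rw [show t + h₂ - (t - h₁) = h₁ + h₂ by ring, integral_comp_abs_sub hω h1 h2] at key
  have hdiff : f' t - (h₁ + h₂)⁻¹ • (f (t + h₂) - f (t - h₁)) =
      -((h₁ + h₂)⁻¹ • (f (t + h₂) - f (t - h₁) - (h₁ + h₂) • f' t)) := by
    simp only [smul_sub, inv_smul_smul₀ hp.ne']
    abel
  rw [hdiff, norm_neg, norm_smul, Real.norm_of_nonneg (inv_nonneg.2 hp.le), div_eq_inv_mul]
  gcongr

theorem norm_inv_smul_sub_le {x y : E} {r C : ℝ} (hr : 0 ≤ r) (hx : ‖x‖ ≤ C) (hy : ‖y‖ ≤ C) :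
    ‖r⁻¹ • (x - y)‖ ≤ 2 / r * C := by
  rw [norm_smul, Real.norm_of_nonneg (inv_nonneg.2 hr), div_eq_mul_inv, mul_comm 2, mul_assoc]
  exact mul_le_mul_of_nonneg_left ((norm_sub_le x y).trans (by linarith)) (inv_nonneg.2 hr)

end UpperBound

section LowerBound

variable {E : Type*} [NormedAddCommGroup E] [NormedSpace ℝ E] {ω : ℝ → ℝ} {a b : ℝ}

theorem W1HHolder.continuousOn {f f' : ℝ → E} (hW : W1HHolder ω a b f f') :
    ContinuousOn f (Icc a b) :=
  fun x hx => (hW.1 x hx).continuousWithinAt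

theorem W1HHolder.neg {f f' : ℝ → E} (hW : W1HHolder ω a b f f') :
    W1HHolder ω a b (-f) (-f') :=
  ⟨fun x hx => (hW.1 x hx).neg, fun s hs u hu => by
    simpa [neg_add_eq_sub, norm_sub_rev] using hW.2 s hs u hu⟩

theorem W1HHolder.smul_const {F ψ : ℝ → ℝ} {e : E} (hF : ∀ s, HasDerivAt F (ψ s) s)
    (hψ : HHolder ω a b ψ) (he : ‖e‖ = 1) :
    W1HHolder ω a b (fun s => F s • e) (fun s => ψ s • e) := by
  refine ⟨fun s _ => ((hF s).smul_const e).hasDerivWithinAt, fun s hs u hu => ?_⟩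
  rw [← sub_smul, norm_smul, he, mul_one]
  exact hψ s hs u hu

theorem norm_deriv_le_of_forall_norm_deriv_sub_le {T : (ℝ → E) → E} {N c M t : ℝ}
    (hT : ∀ g : ℝ → E, ContinuousOn g (Icc a b) → ∀ C : ℝ,
      (∀ u ∈ Icc a b, ‖g u‖ ≤ C) → ‖T g‖ ≤ N * C)
    (hc : ∀ f f' : ℝ → E, W1HHolder ω a b f f' → ‖f' t - T f‖ ≤ c)
    {f f' : ℝ → E} (hW : W1HHolder ω a b f f') (hM : ∀ u ∈ Icc a b, ‖f u‖ ≤ M) :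
    ‖f' t‖ ≤ c + N * M := by
  have hsplit : (2 : ℝ) • f' t = (f' t - T f) - ((-f') t - T (-f)) + (T f - T (-f)) := by
    rw [two_smul, Pi.neg_apply]
    abel
  have key : 2 * ‖f' t‖ ≤ c + c + (N * M + N * M) :=
    calc 2 * ‖f' t‖ = ‖(2 : ℝ) • f' t‖ := by rw [norm_smul, Real.norm_two]
      _ ≤ ‖f' t - T f‖ + ‖(-f') t - T (-f)‖ + (‖T f‖ + ‖T (-f)‖) := by
        rw [hsplit]
        exact (norm_add_le _ _).trans (add_le_add (norm_sub_le _ _) (norm_sub_le _ _))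
      _ ≤ c + c + (N * M + N * M) := by
        gcongr
        · exact hc f f' hW
        · exact hc _ _ hW.neg
        · exact hT f hW.continuousOn M hM
        · exact hT _ hW.neg.continuousOn M fun u hu => by simpa using hM u hu
  linarith

def modulusTent (ω : ℝ → ℝ) (t D s : ℝ) : ℝ := max 0 (D - ω |s - t|)

theorem modulusTent_nonneg (t D s : ℝ) : 0 ≤ modulusTent ω t D s := le_max_left _ _

theorem modulusTent_of_le {t D s : ℝ} (h : ω |s - t| ≤ D) :
    modulusTent ω t D s = D - ω |s - t| :=
  max_eq_right (sub_nonneg.2 h)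

theorem modulusTent_of_ge {t D s : ℝ} (h : D ≤ ω |s - t|) : modulusTent ω t D s = 0 :=
  max_eq_left (sub_nonpos.2 h)

theorem modulusTent_self (hω : ω 0 = 0) {t D : ℝ} (hD : 0 ≤ D) : modulusTent ω t D t = D := by
  simp [modulusTent, hω, hD]

theorem continuous_modulusTent (hω : ContinuousOn ω (Ici 0)) (t D : ℝ) :
    Continuous (modulusTent ω t D) :=
  continuous_const.max (continuous_const.sub (continuous_comp_abs_sub hω t))

theorem IsModulus.hHolder_modulusTent (hω : IsModulus ω) (t D : ℝ) :
    HHolder ω a b (modulusTent ω t D) := by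
  intro s _ u _
  rw [Real.norm_eq_abs, modulusTent, modulusTent, max_comm 0, max_comm 0]
  refine (abs_max_sub_max_le_abs _ _ _).trans ?_
  rw [sub_sub_sub_cancel_left, abs_sub_comm u s]
  exact hω.abs_sub_comp_abs_sub_le t s u

theorem IsModulus.modulusTent_eq_zero (hω : IsModulus ω) {t h₁ h₂ s : ℝ} (h0 : 0 ≤ max h₁ h₂)
    (hs : max h₁ h₂ ≤ |s - t|) : modulusTent ω t (ω (max h₁ h₂)) s = 0 :=
  modulusTent_of_ge (hω.mono h0 hs)

theorem IsModulus.integral_modulusTent_nonneg (hω : IsModulus ω) {t h₁ h₂ s : ℝ} (h1 : 0 ≤ h₁)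
    (hL : a < t - h₁ → h₂ ≤ h₁) (hs : a ≤ s) :
    0 ≤ ∫ u in (t - h₁)..s, modulusTent ω t (ω (max h₁ h₂)) u := by
  rcases le_or_gt (t - h₁) s with hle | hlt
  · exact integral_nonneg hle fun u _ => modulusTent_nonneg t _ u
  · have hmax : max h₁ h₂ = h₁ := max_eq_left (hL (by linarith))
    refine (integral_congr (g := fun _ => 0) fun u hu => ?_).trans integral_zero |>.ge
    rw [uIcc_of_ge hlt.le] at hu
    refine hω.modulusTent_eq_zero (h1.trans (le_max_left _ _)) ?_
    rw [hmax, abs_of_nonpos (by linarith [hu.2])]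
    linarith [hu.2]

theorem IsModulus.integral_modulusTent_le (hω : IsModulus ω) {t h₁ h₂ s : ℝ} (h2 : 0 ≤ h₂)
    (hR : t + h₂ < b → h₁ ≤ h₂) (hs : s ≤ b) :
    ∫ u in (t - h₁)..s, modulusTent ω t (ω (max h₁ h₂)) u ≤
      ∫ u in (t - h₁)..(t + h₂), modulusTent ω t (ω (max h₁ h₂)) u := by
  have hint := (continuous_modulusTent hω.2.1 t (ω (max h₁ h₂))).intervalIntegrable (μ := volume)
  rw [← sub_nonneg, integral_interval_sub_left (hint _ _) (hint _ _)]
  rcases le_or_gt s (t + h₂) with hle | hlt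
  · exact integral_nonneg hle fun u _ => modulusTent_nonneg t _ u
  · have hmax : max h₁ h₂ = h₂ := max_eq_right (hR (by linarith))
    refine (integral_congr (g := fun _ => 0) fun u hu => ?_).trans integral_zero |>.ge
    rw [uIcc_of_ge hlt.le] at hu
    refine hω.modulusTent_eq_zero (h2.trans (le_max_right _ _)) ?_
    rw [hmax, abs_of_nonneg (by linarith [hu.1])]
    linarith [hu.1]

theorem IsModulus.integral_modulusTent_eq (hω : IsModulus ω) {t h₁ h₂ : ℝ} (h1 : 0 ≤ h₁)
    (h2 : 0 ≤ h₂) :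
    ∫ u in (t - h₁)..(t + h₂), modulusTent ω t (ω (max h₁ h₂)) u =
      (h₁ + h₂) * ω (max h₁ h₂) - ((∫ u in (0:ℝ)..h₁, ω u) + ∫ u in (0:ℝ)..h₂, ω u) := by
  have hcont := continuous_comp_abs_sub hω.2.1 t
  have htent : EqOn (modulusTent ω t (ω (max h₁ h₂))) (fun s => ω (max h₁ h₂) - ω |s - t|)
      (uIcc (t - h₁) (t + h₂)) := by
    intro s hs
    rw [uIcc_of_le (by linarith)] at hs
    refine modulusTent_of_le (hω.mono (abs_nonneg _) (abs_le.2 ⟨?_, ?_⟩))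
    · linarith [hs.1, le_max_left h₁ h₂]
    · linarith [hs.2, le_max_right h₁ h₂]
  rw [integral_congr htent, integral_sub intervalIntegrable_const (hcont.intervalIntegrable _ _),
    intervalIntegral.integral_const, integral_comp_abs_sub hω.2.1 h1 h2, smul_eq_mul]
  ring

theorem stechkin_lower_bound [Nontrivial E] (hω : IsModulus ω) {t h₁ h₂ : ℝ} (h1 : 0 ≤ h₁)
    (h2 : 0 ≤ h₂) (hp : 0 < h₁ + h₂) (hL : a < t - h₁ → h₂ ≤ h₁) (hR : t + h₂ < b → h₁ ≤ h₂)
    {T : (ℝ → E) → E}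
    (hT : ∀ g : ℝ → E, ContinuousOn g (Icc a b) → ∀ C : ℝ,
      (∀ u ∈ Icc a b, ‖g u‖ ≤ C) → ‖T g‖ ≤ (2 / (h₁ + h₂)) * C)
    {c : ℝ} (hc : ∀ f f' : ℝ → E, W1HHolder ω a b f f' → ‖f' t - T f‖ ≤ c) :
    ((∫ u in (0:ℝ)..h₁, ω u) + ∫ u in (0:ℝ)..h₂, ω u) / (h₁ + h₂) ≤ c := by
  set I := (∫ u in (0:ℝ)..h₁, ω u) + ∫ u in (0:ℝ)..h₂, ω u
  obtain ⟨e, he⟩ := exists_norm_eq E zero_le_one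
  set D := ω (max h₁ h₂)
  set F := fun s => ∫ u in (t - h₁)..s, modulusTent ω t D u
  have hF (s : ℝ) : HasDerivAt (fun s => F s - F (t + h₂) / 2) (modulusTent ω t D s) s :=
    ((continuous_modulusTent hω.2.1 t D).integral_hasStrictDerivAt _ s).hasDerivAt.sub_const _
  have hW := W1HHolder.smul_const hF (hω.hHolder_modulusTent (a := a) (b := b) t D) he
  have hcentred (u : ℝ) (hu : u ∈ Icc a b) : ‖(F u - F (t + h₂) / 2) • e‖ ≤ F (t + h₂) / 2 := by
    have h0 : 0 ≤ F u := hω.integral_modulusTent_nonneg h1 hL hu.1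
    have hle : F u ≤ F (t + h₂) := hω.integral_modulusTent_le h2 hR hu.2
    rw [norm_smul, he, mul_one, Real.norm_eq_abs, abs_le]
    constructor <;> linarith
  have key := norm_deriv_le_of_forall_norm_deriv_sub_le hT hc hW hcentred
  have hmass : F (t + h₂) = (h₁ + h₂) * D - I := hω.integral_modulusTent_eq h1 h2
  rw [norm_smul, he, mul_one, Real.norm_of_nonneg (modulusTent_nonneg t D t),
    modulusTent_self hω.1 (hω.nonneg (h1.trans (le_max_left _ _))), hmass] at key
  have hNM : 2 / (h₁ + h₂) * (((h₁ + h₂) * D - I) / 2) = D - I / (h₁ + h₂) := by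
    field_simp
  linarith

end LowerBound

theorem stechkin_approximation_of_differentiation_general
    {E : Type*} [NormedAddCommGroup E] [NormedSpace ℝ E] [Nontrivial E]
    (ω : ℝ → ℝ) (hω : IsModulus ω)
    (a b : ℝ) (hab : a < b) (t : ℝ) (ht : t ∈ Set.Icc a b) (h : ℝ) (hh : 0 < h)
    (h₁ h₂ : ℝ) (hh₁ : h₁ = min h (t - a)) (hh₂ : h₂ = min h (b - t)) :
    -- (i) every operator bounded (on continuous functions) with norm at most `2/(h₁+h₂)`
    -- deviates from differentiation at `t` by at least `(I(h₁)+I(h₂))/(h₁+h₂)`: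
    (∀ T : (ℝ → E) → E,
      (∀ g : ℝ → E, ContinuousOn g (Set.Icc a b) → ∀ C : ℝ,
        (∀ u ∈ Set.Icc a b, ‖g u‖ ≤ C) → ‖T g‖ ≤ (2 / (h₁ + h₂)) * C) →
      ∀ c : ℝ, (∀ f f' : ℝ → E, W1HHolder ω a b f f' → ‖f' t - T f‖ ≤ c) →
        ((∫ u in (0:ℝ)..h₁, ω u) + ∫ u in (0:ℝ)..h₂, ω u) / (h₁ + h₂) ≤ c) ∧
    -- (ii) the divided-difference operator has norm at most `2/(h₁+h₂)` …
    (∀ g : ℝ → E, ContinuousOn g (Set.Icc a b) → ∀ C : ℝ,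
      (∀ u ∈ Set.Icc a b, ‖g u‖ ≤ C) →
      ‖(h₁ + h₂)⁻¹ • (g (t + h₂) - g (t - h₁))‖ ≤ (2 / (h₁ + h₂)) * C) ∧
    -- … and attains the best approximation:
    ∀ f f' : ℝ → E, W1HHolder ω a b f f' →
      ‖f' t - (h₁ + h₂)⁻¹ • (f (t + h₂) - f (t - h₁))‖ ≤
        ((∫ u in (0:ℝ)..h₁, ω u) + ∫ u in (0:ℝ)..h₂, ω u) / (h₁ + h₂) := by
  have h1 : 0 ≤ h₁ := hh₁ ▸ le_min hh.le (sub_nonneg.2 ht.1)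
  have h2 : 0 ≤ h₂ := hh₂ ▸ le_min hh.le (sub_nonneg.2 ht.2)
  have hta : a ≤ t - h₁ := by linarith [hh₁ ▸ min_le_right h (t - a)]
  have htb : t + h₂ ≤ b := by linarith [hh₂ ▸ min_le_right h (b - t)]
  have hp : 0 < h₁ + h₂ := by
    rcases lt_or_ge a t with hat | hat
    · linarith [hh₁ ▸ lt_min hh (sub_pos.2 hat)]
    · linarith [hh₂ ▸ lt_min hh (by linarith : 0 < b - t)]
  -- a step that stops short of the end of `[a, b]` equals `h`, the larger of the two
  have hL : a < t - h₁ → h₂ ≤ h₁ := fun hlt => by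
    rcases min_choice h (t - a) with hmin | hmin <;> rw [hmin] at hh₁
    · exact hh₁ ▸ hh₂ ▸ min_le_left _ _
    · linarith
  have hR : t + h₂ < b → h₁ ≤ h₂ := fun hlt => by
    rcases min_choice h (b - t) with hmin | hmin <;> rw [hmin] at hh₂
    · exact hh₂ ▸ hh₁ ▸ min_le_left _ _
    · linarith
  refine ⟨fun T hT c hc => stechkin_lower_bound hω h1 h2 hp hL hR hT hc,
    fun g _ C hC => norm_inv_smul_sub_le hp.le (hC _ ⟨by linarith, htb⟩) (hC _ ⟨hta, by linarith⟩),
    fun f f' hW => hW.norm_deriv_sub_divided_difference_le hω.2.1 h1 h2 hp hta htb⟩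

/-- Stechkin-type theorem: best approximation on `W¹H^ω([a,b],E)` of the operator `f ↦ f′(t)`
by operators `T` on `C([a,b],E)` of norm at most `N = 2/(h₁+h₂)` equals
`(I(h₁) + I(h₂))/(h₁+h₂)` and is attained at the divided-difference operator
`T*(g) = (g(t+h₂) − g(t−h₁))/(h₁+h₂)`, where `h₁ = min{h, t−a}`, `h₂ = min{h, b−t}` and
`I(α) = ∫_0^α ω(u) du`. -/
theorem stechkin_approximation_of_differentiation
    {E : Type*} [NormedAddCommGroup E] [NormedSpace ℝ E] [CompleteSpace E] [Nontrivial E]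
    (ω : ℝ → ℝ) (hω : IsModulus ω)
    (a b : ℝ) (hab : a < b) (t : ℝ) (ht : t ∈ Set.Icc a b) (h : ℝ) (hh : 0 < h)
    (h₁ h₂ : ℝ) (hh₁ : h₁ = min h (t - a)) (hh₂ : h₂ = min h (b - t)) :
    -- (i) every operator bounded (on continuous functions) with norm at most `2/(h₁+h₂)`
    -- deviates from differentiation at `t` by at least `(I(h₁)+I(h₂))/(h₁+h₂)`:
    (∀ T : (ℝ → E) → E,
      (∀ g : ℝ → E, ContinuousOn g (Set.Icc a b) → ∀ C : ℝ,
        (∀ u ∈ Set.Icc a b, ‖g u‖ ≤ C) → ‖T g‖ ≤ (2 / (h₁ + h₂)) * C) →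
      ∀ c : ℝ, (∀ f f' : ℝ → E, W1HHolder ω a b f f' → ‖f' t - T f‖ ≤ c) →
        ((∫ u in (0:ℝ)..h₁, ω u) + ∫ u in (0:ℝ)..h₂, ω u) / (h₁ + h₂) ≤ c) ∧
    -- (ii) the divided-difference operator has norm at most `2/(h₁+h₂)` …
    (∀ g : ℝ → E, ContinuousOn g (Set.Icc a b) → ∀ C : ℝ,
      (∀ u ∈ Set.Icc a b, ‖g u‖ ≤ C) →
      ‖(h₁ + h₂)⁻¹ • (g (t + h₂) - g (t - h₁))‖ ≤ (2 / (h₁ + h₂)) * C) ∧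
    -- … and attains the best approximation:
    ∀ f f' : ℝ → E, W1HHolder ω a b f f' →
      ‖f' t - (h₁ + h₂)⁻¹ • (f (t + h₂) - f (t - h₁))‖ ≤
        ((∫ u in (0:ℝ)..h₁, ω u) + ∫ u in (0:ℝ)..h₂, ω u) / (h₁ + h₂) :=
  stechkin_approximation_of_differentiation_general ω hω a b hab t ht h hh h₁ h₂ hh₁ hh₂
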